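/- Let A ∈ ℝ^{N×M} and let K ≤ rank(A). Let S ∈ ℝ^{M×K} be a selection matrix for an index set 𝒮 of K distinct columns such that V_Kᵀ S is nonsingular, and let 𝒮^opt be an index set of K distinct columns maximizing φ_EIG over all index sets of K distinct columns. Then Ψ(Σ_K / ‖(Sᵀ V_K)^{-1}‖₂) ≤ φ_EIG(𝒮) ≤ φ_EIG(𝒮^opt) ≤ Ψ(Σ_K) ≤ Ψ(A). -/

import Mathlib

noncomputable section
open Matrix BigOperators Kronecker

/-- The selection matrix whose `j`-th column is the standard basis vector `e_{s j}`. -/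
def selectionMatrix {M K : ℕ} (s : Fin K → Fin M) : Matrix (Fin M) (Fin K) ℝ :=
  Matrix.of fun i j => if s j = i then 1 else 0

theorem Matrix.isHermitian_transpose_mul_self {m n α : Type*} [Fintype m] [CommSemiring α]
    [StarRing α] [TrivialStar α] (A : Matrix m n α) : (Aᵀ * A).IsHermitian :=
  by rw [Matrix.IsHermitian, Matrix.conjTranspose_eq_transpose_of_trivial, Matrix.transpose_mul,
    Matrix.transpose_transpose]

/-- The singular values of a real matrix, arranged in decreasing order:
the nonnegative square roots of the eigenvalues of `AᵀA`. -/
noncomputable def singularValues {N M : ℕ} (A : Matrix (Fin N) (Fin M) ℝ) : Fin M → ℝ :=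
  fun j =>
    Real.sqrt ((Matrix.isHermitian_transpose_mul_self A).eigenvalues
      (Tuple.sort (fun i => -(Matrix.isHermitian_transpose_mul_self A).eigenvalues i) j))

/-- The spectral norm (largest singular value) of a real matrix. -/
noncomputable def specNorm {n m : ℕ} (B : Matrix (Fin n) (Fin m) ℝ) : ℝ :=
  ⨆ j, singularValues B j

/-- `Ψ(B) = logdet(I + B Bᵀ)`. -/
noncomputable def Psi {n m : ℕ} (B : Matrix (Fin n) (Fin m) ℝ) : ℝ :=
  Real.log (1 + B * Bᵀ).det

/-- The expected information gain `φ_EIG` of the selection `s` for the matrix `A`: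
`logdet(I_N + (AS)(AS)ᵀ)`. -/
noncomputable def phiEIG {N M K : ℕ} (A : Matrix (Fin N) (Fin M) ℝ) (s : Fin K → Fin M) : ℝ :=
  Psi (A * selectionMatrix s)

/-! ### Auxiliary spectral lemmas -/

section helpers
variable {n : ℕ}

lemma real_spectral {H : Matrix (Fin n) (Fin n) ℝ} (hH : H.IsHermitian) :
    ∃ U : Matrix (Fin n) (Fin n) ℝ, U * Uᵀ = 1 ∧ Uᵀ * U = 1 ∧
      H = U * Matrix.diagonal hH.eigenvalues * Uᵀ := by
  refine ⟨hH.eigenvectorUnitary, ?_, ?_, ?_⟩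
  · have := (Matrix.mem_unitaryGroup_iff).mp hH.eigenvectorUnitary.2
    simpa [Matrix.star_eq_conjTranspose, Matrix.conjTranspose_eq_transpose_of_trivial] using this
  · have := (Matrix.mem_unitaryGroup_iff').mp hH.eigenvectorUnitary.2
    simpa [Matrix.star_eq_conjTranspose, Matrix.conjTranspose_eq_transpose_of_trivial] using this
  · have := hH.spectral_theorem
    simpa [Matrix.star_eq_conjTranspose, Matrix.conjTranspose_eq_transpose_of_trivial] using this

lemma one_add_diagonal (d : Fin n → ℝ) :
    (1 : Matrix (Fin n) (Fin n) ℝ) + Matrix.diagonal d = Matrix.diagonal (fun i => 1 + d i) := by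
  ext i j; by_cases h : i = j <;> simp [Matrix.diagonal_apply, Matrix.one_apply, h]

lemma det_one_add_of_hermitian {H : Matrix (Fin n) (Fin n) ℝ} (hH : H.IsHermitian) :
    (1 + H).det = ∏ i, (1 + hH.eigenvalues i) := by
  obtain ⟨U, hUUt, hUtU, hspec⟩ := real_spectral hH
  have h1 : (1 : Matrix (Fin n) (Fin n) ℝ) + H = U * (1 + Matrix.diagonal hH.eigenvalues) * Uᵀ := by
    rw [Matrix.mul_add, Matrix.add_mul, Matrix.mul_one, hUUt, ← hspec]
  have hdetU : U.det * Uᵀ.det = 1 := by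
    rw [← Matrix.det_mul, hUUt, Matrix.det_one]
  rw [h1, Matrix.det_mul, Matrix.det_mul, mul_comm (U.det), mul_assoc,
    hdetU, mul_one, one_add_diagonal, Matrix.det_diagonal]

lemma one_le_det_one_add {P : Matrix (Fin n) (Fin n) ℝ} (hP : P.PosSemidef) :
    1 ≤ (1 + P).det := by
  rw [det_one_add_of_hermitian hP.isHermitian]
  have h := Finset.prod_le_prod (s := (Finset.univ : Finset (Fin n))) (f := fun _ : Fin n => (1:ℝ))
    (g := fun i => 1 + hP.isHermitian.eigenvalues i) (fun i _ => zero_le_one)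
    (fun i _ => by linarith [hP.eigenvalues_nonneg i])
  simpa using h

lemma det_one_add_pos {P : Matrix (Fin n) (Fin n) ℝ} (hP : P.PosSemidef) :
    0 < (1 + P).det := lt_of_lt_of_le one_pos (one_le_det_one_add hP)

lemma det_mono {P R : Matrix (Fin n) (Fin n) ℝ} (hP : P.PosSemidef) (hR : R.PosSemidef) :
    (1 + P).det ≤ (1 + P + R).det := by
  have hQ : (1 + P).PosDef := Matrix.PosDef.add_posSemidef Matrix.PosDef.one hP
  obtain ⟨W, hWps, hWW⟩ : ∃ W : Matrix (Fin n) (Fin n) ℝ, W.PosSemidef ∧ W * W = 1 + P := by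
    open scoped MatrixOrder in
    exact ⟨CFC.sqrt (1 + P), (CFC.sqrt_nonneg _).posSemidef,
      CFC.sqrt_mul_sqrt_self _ hQ.posSemidef.nonneg⟩
  have hWdet : W.det * W.det = (1 + P).det := by rw [← Matrix.det_mul, hWW]
  have hdetW : IsUnit W.det := by
    refine isUnit_iff_ne_zero.mpr fun h => ?_
    have := hQ.det_pos
    rw [← hWdet, h, mul_zero] at this
    exact lt_irrefl _ this
  have hWinv : W * W⁻¹ = 1 := Matrix.mul_nonsing_inv W hdetW
  have hWinv' : W⁻¹ * W = 1 := Matrix.nonsing_inv_mul W hdetW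
  have hWinvH : W⁻¹ᵀ = W⁻¹ := by
    rw [← Matrix.conjTranspose_eq_transpose_of_trivial]
    exact hWps.isHermitian.inv
  set X := W⁻¹ * R * W⁻¹ with hX
  have hXps : X.PosSemidef := by
    have := hR.mul_mul_conjTranspose_same W⁻¹
    rwa [Matrix.conjTranspose_eq_transpose_of_trivial, hWinvH] at this
  have h2 : W * X * W = R := by
    simp only [hX, Matrix.mul_assoc]
    rw [hWinv', Matrix.mul_one, ← Matrix.mul_assoc, hWinv, Matrix.one_mul]
  have key : 1 + P + R = W * (1 + X) * W := by
    rw [Matrix.mul_add, Matrix.mul_one, Matrix.add_mul, hWW, h2]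
  have hdet : (1 + P + R).det = (1 + P).det * (1 + X).det := by
    rw [key, Matrix.det_mul, Matrix.det_mul]
    linear_combination (1 + X).det * hWdet
  rw [hdet]
  nlinarith [one_le_det_one_add hXps, det_one_add_pos hP]

lemma loewner_le_smul_one {H : Matrix (Fin n) (Fin n) ℝ} (hH : H.IsHermitian) {μ : ℝ}
    (hμ : ∀ i, hH.eigenvalues i ≤ μ) : (μ • (1 : Matrix (Fin n) (Fin n) ℝ) - H).PosSemidef := by
  obtain ⟨U, hUUt, hUtU, hspec⟩ := real_spectral hH
  have hd : Matrix.diagonal (fun i : Fin n => μ - hH.eigenvalues i)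
      = μ • (1 : Matrix (Fin n) (Fin n) ℝ) - Matrix.diagonal hH.eigenvalues := by
    ext i j; by_cases h : i = j <;> simp [Matrix.diagonal_apply, Matrix.one_apply, h]
  have h1 : μ • (1 : Matrix (Fin n) (Fin n) ℝ) - H
      = U * Matrix.diagonal (fun i => μ - hH.eigenvalues i) * Uᵀ := by
    rw [hd, Matrix.mul_sub, Matrix.sub_mul, ← hspec]
    congr 1
    rw [Matrix.mul_smul, Matrix.mul_one, Matrix.smul_mul, hUUt]
  have hdps : (Matrix.diagonal (fun i : Fin n => μ - hH.eigenvalues i)).PosSemidef :=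
    Matrix.PosSemidef.diagonal (fun i => by simpa using sub_nonneg.mpr (hμ i))
  have := hdps.mul_mul_conjTranspose_same U
  rwa [Matrix.conjTranspose_eq_transpose_of_trivial, ← h1] at this

lemma psd_mul_transpose_self {a b : ℕ} (B : Matrix (Fin a) (Fin b) ℝ) : (B * Bᵀ).PosSemidef := by
  have := Matrix.posSemidef_self_mul_conjTranspose B
  rwa [Matrix.conjTranspose_eq_transpose_of_trivial] at this

lemma psd_transpose_self_mul {a b : ℕ} (B : Matrix (Fin a) (Fin b) ℝ) : (Bᵀ * B).PosSemidef := by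
  have := Matrix.posSemidef_conjTranspose_mul_self B
  rwa [Matrix.conjTranspose_eq_transpose_of_trivial] at this

lemma psd_conj {a b : ℕ} {X : Matrix (Fin b) (Fin b) ℝ} (hX : X.PosSemidef)
    (B : Matrix (Fin b) (Fin a) ℝ) : (Bᵀ * X * B).PosSemidef := by
  have := hX.conjTranspose_mul_mul_same B
  rwa [Matrix.conjTranspose_eq_transpose_of_trivial] at this

lemma psd_conj' {a b : ℕ} {X : Matrix (Fin b) (Fin b) ℝ} (hX : X.PosSemidef)
    (B : Matrix (Fin a) (Fin b) ℝ) : (B * X * Bᵀ).PosSemidef := by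
  have := hX.mul_mul_conjTranspose_same B
  rwa [Matrix.conjTranspose_eq_transpose_of_trivial] at this

end helpers

/-! ### Cauchy–Binet -/

section cb
variable {K M : ℕ}

lemma cb_half (X Y : Matrix (Fin K) (Fin M) ℝ) :
    (X * Yᵀ).det = ∑ p : Fin K → Fin M, (X.submatrix id p).det * ∏ k, Y k (p k) := by
  rw [Matrix.det_apply']
  have h1 : ∀ σ : Equiv.Perm (Fin K),
      (↑↑(Equiv.Perm.sign σ) * ∏ i, (X * Yᵀ) (σ i) i : ℝ)
      = ∑ p : Fin K → Fin M, ↑↑(Equiv.Perm.sign σ) * ∏ i, (X (σ i) (p i) * Y i (p i)) := by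
    intro σ
    have : (∏ i, (X * Yᵀ) (σ i) i : ℝ) = ∏ i, ∑ j, X (σ i) j * Y i j := by
      apply Finset.prod_congr rfl
      intro i _
      simp [Matrix.mul_apply]
    rw [this, Finset.prod_univ_sum, Finset.mul_sum]
    rfl
  simp_rw [h1]
  rw [Finset.sum_comm]
  apply Finset.sum_congr rfl
  intro p _
  rw [Matrix.det_apply', Finset.sum_mul]
  apply Finset.sum_congr rfl
  intro σ _
  rw [Finset.prod_mul_distrib]
  simp [Matrix.submatrix_apply, mul_assoc]

lemma card_image_fin {p : Fin K → Fin M} (hp : Function.Injective p) :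
    (Finset.image p Finset.univ).card = K := by
  rw [Finset.card_image_of_injective _ hp, Finset.card_univ, Fintype.card_fin]

/-- The permutation sorting an injective tuple. -/
noncomputable def permOf (p : Fin K → Fin M) (hp : Function.Injective p) :
    Equiv.Perm (Fin K) :=
  Equiv.ofBijective
    (fun k => ((Finset.image p Finset.univ).orderIsoOfFin (card_image_fin hp)).symm
      ⟨p k, Finset.mem_image_of_mem p (Finset.mem_univ k)⟩)
    (Finite.injective_iff_bijective.mp (fun a b hab => by
      have := congrArg
        (fun z => (((Finset.image p Finset.univ).orderIsoOfFin (card_image_fin hp)) z : Fin M)) hab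
      simp only [OrderIso.apply_symm_apply] at this
      exact hp this))

lemma comp_permOf {p : Fin K → Fin M} (hp : Function.Injective p) :
    ⇑((Finset.image p Finset.univ).orderEmbOfFin (card_image_fin hp)) ∘ ⇑(permOf p hp) = p := by
  funext k
  simp only [Function.comp_apply, permOf, Equiv.ofBijective_apply]
  rw [← Finset.coe_orderIsoOfFin_apply, OrderIso.apply_symm_apply]

lemma cauchy_binet (X Y : Matrix (Fin K) (Fin M) ℝ) :
    (X * Yᵀ).det = ∑ p ∈ Finset.univ.filter (fun p : Fin K → Fin M => StrictMono p),
      (X.submatrix id p).det * (Y.submatrix id p).det := by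
  classical
  rw [cb_half]
  rw [← Finset.sum_filter_of_ne (s := Finset.univ)
    (p := fun p : Fin K → Fin M => Function.Injective p)
    (f := fun p => (X.submatrix id p).det * ∏ k, Y k (p k)) ?hne]
  case hne =>
    intro p _ hval
    by_contra hinj
    rw [Function.not_injective_iff] at hinj
    obtain ⟨a, b, hab, hne⟩ := hinj
    have : (X.submatrix id p).det = 0 :=
      Matrix.det_zero_of_column_eq hne (fun k => by simp [Matrix.submatrix_apply, hab])
    apply hval
    rw [this, zero_mul]
  have key : ∑ p ∈ Finset.univ.filter (fun p : Fin K → Fin M => Function.Injective p),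
      (X.submatrix id p).det * ∏ k, Y k (p k)
      = ∑ q ∈ (Finset.univ.filter (fun p : Fin K → Fin M => StrictMono p)) ×ˢ
          (Finset.univ : Finset (Equiv.Perm (Fin K))),
        (X.submatrix id (q.1 ∘ q.2)).det * ∏ k, Y k ((q.1 ∘ q.2) k) := by
    refine Finset.sum_bij'
      (fun p hp => (⇑((Finset.image p Finset.univ).orderEmbOfFin
          (card_image_fin (Finset.mem_filter.mp hp).2)),
        permOf p (Finset.mem_filter.mp hp).2))
      (fun q _ => q.1 ∘ ⇑q.2) ?_ ?_ ?_ ?_ ?_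
    · intro p hp
      simp only [Finset.mem_product, Finset.mem_filter, Finset.mem_univ, true_and, and_true]
      exact (Finset.orderEmbOfFin _ _).strictMono
    · intro q hq
      simp only [Finset.mem_product, Finset.mem_filter, Finset.mem_univ, true_and, and_true] at hq ⊢
      exact hq.injective.comp (Equiv.injective _)
    · intro p hp
      exact comp_permOf (Finset.mem_filter.mp hp).2
    · intro q hq
      obtain ⟨g, τ⟩ := q
      simp only [Finset.mem_product, Finset.mem_filter, Finset.mem_univ, true_and, and_true] at hq
      have hg : StrictMono g := hq
      have hginj : Function.Injective (g ∘ ⇑τ) := hg.injective.comp (Equiv.injective τ)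
      have hmem : ∀ x, g x ∈ Finset.image (g ∘ ⇑τ) Finset.univ := fun x =>
        Finset.mem_image.mpr ⟨τ⁻¹ x, Finset.mem_univ _, by simp⟩
      have huniq : g = ⇑((Finset.image (g ∘ ⇑τ) Finset.univ).orderEmbOfFin
          (card_image_fin hginj)) :=
        Finset.orderEmbOfFin_unique (card_image_fin hginj) hmem hg
      refine Prod.ext ?_ ?_
      · exact huniq.symm
      · apply Equiv.ext
        intro k
        simp only [permOf, Equiv.ofBijective_apply]
        rw [OrderIso.symm_apply_eq]
        apply Subtype.ext
        rw [Finset.coe_orderIsoOfFin_apply, ← congrFun huniq (τ k)]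
        rfl
    · intro p hp
      have := (comp_permOf (Finset.mem_filter.mp hp).2).symm
      simp only []
      rw [← this]
  rw [key, Finset.sum_product]
  apply Finset.sum_congr rfl
  intro g hg
  have hgmono : StrictMono g := (Finset.mem_filter.mp hg).2
  have hsub : ∀ τ : Equiv.Perm (Fin K), X.submatrix id (g ∘ τ)
      = (X.submatrix id g).submatrix id ⇑τ := by
    intro τ; rw [Matrix.submatrix_submatrix]; rfl
  calc ∑ τ : Equiv.Perm (Fin K), (X.submatrix id (g ∘ ⇑τ)).det * ∏ k, Y k ((g ∘ ⇑τ) k)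
      = ∑ τ : Equiv.Perm (Fin K),
          (X.submatrix id g).det * (↑↑(Equiv.Perm.sign τ) * ∏ k, Y (τ⁻¹ k) (g k)) := by
        apply Finset.sum_congr rfl
        intro τ _
        rw [hsub, Matrix.det_permute']
        have hprod : (∏ k, Y k ((g ∘ ⇑τ) k)) = ∏ k, Y (τ⁻¹ k) (g k) := by
          rw [← Equiv.prod_comp τ⁻¹ (fun k => Y k ((g ∘ ⇑τ) k))]
          apply Finset.prod_congr rfl
          intro k _
          simp
        rw [hprod]
        ring
    _ = (X.submatrix id g).det * (Y.submatrix id g).det := by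
        rw [← Finset.mul_sum]
        congr 1
        rw [Matrix.det_apply']
        rw [← Equiv.sum_comp (Equiv.inv (Equiv.Perm (Fin K)))
          (fun σ => (↑↑(Equiv.Perm.sign σ) * ∏ i, (Y.submatrix id g) (σ i) i : ℝ))]
        apply Finset.sum_congr rfl
        intro τ _
        simp [Equiv.Perm.sign_inv, Matrix.submatrix_apply]

end cb

/-! ### Sorting and selection helpers -/

section sorting
variable {K M : ℕ}

lemma strictMono_le_apply {f : Fin K → Fin M} (hf : StrictMono f) (j : Fin K) :
    (j : ℕ) ≤ (f j : ℕ) := by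
  have H : ∀ n : ℕ, ∀ h : n < K, n ≤ (f ⟨n, h⟩ : ℕ) := by
    intro n
    induction n with
    | zero => intro h; exact Nat.zero_le _
    | succ n ih =>
      intro h
      have h' : n < K := Nat.lt_of_succ_lt h
      have h1 := ih h'
      have h2 : f ⟨n, h'⟩ < f ⟨n + 1, h⟩ := hf (by simp [Fin.lt_def])
      have := Fin.lt_def.mp h2
      omega
  have := H j.1 j.2
  simpa using this

lemma prod_injective_le {q : Fin M → ℝ} (hq : ∀ i, 0 ≤ q i) (hmono : Antitone q)
    {f : Fin K → Fin M} (hf : Function.Injective f) (hKM : K ≤ M) :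
    ∏ j, q (f j) ≤ ∏ j : Fin K, q (Fin.castLE hKM j) := by
  classical
  set t := Finset.image f Finset.univ with ht
  have htc : t.card = K := card_image_fin hf
  set e := t.orderEmbOfFin htc with he
  have h1 : ∏ j, q (f j) = ∏ x ∈ t, q x := (Finset.prod_image (fun a _ b _ h => hf h)).symm
  have himg : Finset.image (⇑e) Finset.univ = t := by
    ext x
    simp only [Finset.mem_image, Finset.mem_univ, true_and]
    constructor
    · rintro ⟨j, rfl⟩; exact Finset.orderEmbOfFin_mem t htc j
    · intro hx
      have : x ∈ Set.range ⇑e := by rw [Finset.range_orderEmbOfFin]; exact hx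
      obtain ⟨j, hj⟩ := this
      exact ⟨j, hj⟩
  have h2 : ∏ x ∈ t, q x = ∏ j, q (e j) := by
    rw [← himg, Finset.prod_image (fun a _ b _ h => e.injective h)]
  rw [h1, h2]
  apply Finset.prod_le_prod (fun j _ => hq _)
  intro j _
  apply hmono
  rw [Fin.le_def]
  exact strictMono_le_apply e.strictMono j

lemma selection_transpose_mul_self {s : Fin K → Fin M} (hs : Function.Injective s) :
    (selectionMatrix s)ᵀ * selectionMatrix s = 1 := by
  ext j k
  simp only [selectionMatrix, Matrix.mul_apply, Matrix.transpose_apply, Matrix.of_apply,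
    Matrix.one_apply]
  rw [Finset.sum_eq_single (s j)]
  · by_cases h : j = k
    · simp [h]
    · have : s j ≠ s k := fun hc => h (hs hc)
      simp [this, h]
      intro h'
      exact absurd h'.symm this
  · intro b _ hb
    simp [Ne.symm hb]
  · simp

lemma mul_selection {N : ℕ} (B : Matrix (Fin N) (Fin M) ℝ) (s : Fin K → Fin M) :
    B * selectionMatrix s = B.submatrix id s := by
  ext i j
  simp only [selectionMatrix, Matrix.mul_apply, Matrix.of_apply, Matrix.submatrix_apply, id]
  rw [Finset.sum_eq_single (s j)]
  · simp
  · intro b _ hb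
    rw [if_neg (fun h => hb h.symm), mul_zero]
  · simp

end sorting

set_option maxHeartbeats 2000000 in
/-- Lemma (GKS/CSSP bound for EIG): `Ψ(Σ_K / ‖(SᵀV_K)⁻¹‖₂) ≤ φ_EIG(𝒮) ≤ φ_EIG(𝒮ᵒᵖᵗ) ≤ Ψ(Σ_K) ≤ Ψ(A)`. -/
theorem cssp_oed_bound {N M K : ℕ} (A : Matrix (Fin N) (Fin M) ℝ) (hK : K ≤ A.rank)
    (V : Matrix (Fin M) (Fin K) ℝ) (hVorth : Vᵀ * V = 1)
    (hVeig : ∀ j : Fin K,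
      (Aᵀ * A) *ᵥ (fun i => V i j) =
        (singularValues A (Fin.castLE (hK.trans A.rank_le_width) j)) ^ 2 • (fun i => V i j))
    (s : Fin K → Fin M) (hs : Function.Injective s)
    (hinv : IsUnit (Vᵀ * selectionMatrix s).det)
    (sopt : Fin K → Fin M) (hsopt : Function.Injective sopt)
    (hopt : ∀ t : Fin K → Fin M, Function.Injective t → phiEIG A t ≤ phiEIG A sopt) :
    Psi ((specNorm (((selectionMatrix s)ᵀ * V)⁻¹))⁻¹ •
        Matrix.diagonal (fun j : Fin K =>
          singularValues A (Fin.castLE (hK.trans A.rank_le_width) j))) ≤ phiEIG A s ∧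
    phiEIG A s ≤ phiEIG A sopt ∧
    phiEIG A sopt ≤ Psi (Matrix.diagonal (fun j : Fin K =>
        singularValues A (Fin.castLE (hK.trans A.rank_le_width) j))) ∧
    Psi (Matrix.diagonal (fun j : Fin K =>
        singularValues A (Fin.castLE (hK.trans A.rank_le_width) j))) ≤ Psi A := by
  classical
  have hKM : K ≤ M := hK.trans A.rank_le_width
  set lam : Fin M → ℝ := (Matrix.isHermitian_transpose_mul_self A).eigenvalues with hlam
  set σp : Equiv.Perm (Fin M) := Tuple.sort (fun i => -lam i) with hσp
  set sv : Fin K → ℝ := fun j : Fin K =>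
    singularValues A (Fin.castLE (hK.trans A.rank_le_width) j) with hsv
  set H : Matrix (Fin M) (Fin M) ℝ := Aᵀ * A with hHdef
  have hH : H.IsHermitian := Matrix.isHermitian_transpose_mul_self A
  have hHps : H.PosSemidef := psd_transpose_self_mul A
  have hlam_nn : ∀ i, 0 ≤ lam i := fun i => hHps.eigenvalues_nonneg i
  have hsv_eq : ∀ j, sv j = Real.sqrt (lam (σp (Fin.castLE hKM j))) := fun j => rfl
  have hsv_nn : ∀ j, 0 ≤ sv j := fun j => by rw [hsv_eq]; exact Real.sqrt_nonneg _
  have hsv_sq : ∀ j, sv j ^ 2 = lam (σp (Fin.castLE hKM j)) := fun j => by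
    rw [hsv_eq]; exact Real.sq_sqrt (hlam_nn _)
  have hanti : Antitone (fun i => 1 + lam (σp i)) := by
    intro a b hab
    have := Tuple.monotone_sort (fun i => -lam i) hab
    simp only [Function.comp_apply] at this
    simp only []
    linarith
  set PD : ℝ := ∏ j : Fin K, (1 + lam (σp (Fin.castLE hKM j))) with hPD
  have hfac1 : ∀ j : Fin K, (1:ℝ) ≤ 1 + lam (σp (Fin.castLE hKM j)) := fun j => by
    linarith [hlam_nn (σp (Fin.castLE hKM j))]
  have hPD1 : 1 ≤ PD := by
    rw [hPD]
    have h := Finset.prod_le_prod (s := (Finset.univ : Finset (Fin K)))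
      (f := fun _ : Fin K => (1:ℝ)) (g := fun j => 1 + lam (σp (Fin.castLE hKM j)))
      (fun i _ => zero_le_one) (fun i _ => hfac1 i)
    simpa using h
  have hPD_pos : 0 < PD := lt_of_lt_of_le one_pos hPD1
  -- Psi of the diagonal matrix
  have hPsiD : Psi (Matrix.diagonal sv) = Real.log PD := by
    unfold Psi
    congr 1
    rw [Matrix.diagonal_transpose, Matrix.diagonal_mul_diagonal, one_add_diagonal,
      Matrix.det_diagonal, hPD]
    apply Finset.prod_congr rfl
    intro j _
    rw [← hsv_sq j]
    ring
  -- ### Part 4 : Psi D ≤ Psi A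
  have part4 : Psi (Matrix.diagonal sv) ≤ Psi A := by
    rw [hPsiD]
    unfold Psi
    have hcomm : (1 + A * Aᵀ).det = (1 + H).det := by
      rw [hHdef, Matrix.det_one_add_mul_comm]
    have hdetH : (1 + H).det = ∏ i, (1 + lam i) := det_one_add_of_hermitian hH
    have hperm : (∏ i, (1 + lam i)) = ∏ i, (1 + lam (σp i)) :=
      (Equiv.prod_comp σp (fun i => 1 + lam i)).symm
    have hmap : PD = ∏ i ∈ Finset.univ.map (Fin.castLEEmb hKM),
        (1 + lam (σp i)) := by
      rw [Finset.prod_map, hPD]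
      rfl
    have hsub : Finset.univ.map (Fin.castLEEmb hKM) ⊆ Finset.univ :=
      Finset.subset_univ _
    have hsdiff := Finset.prod_sdiff (f := fun i => 1 + lam (σp i)) hsub
    have hrest : 1 ≤ ∏ i ∈ Finset.univ \ Finset.univ.map (Fin.castLEEmb hKM),
        (1 + lam (σp i)) := by
      have h := Finset.prod_le_prod
        (s := Finset.univ \ Finset.univ.map (Fin.castLEEmb hKM))
        (f := fun _ : Fin M => (1:ℝ)) (g := fun i => 1 + lam (σp i))
        (fun i _ => zero_le_one) (fun i _ => by linarith [hlam_nn (σp i)])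
      simpa using h
    have hPDle : PD ≤ ∏ i, (1 + lam (σp i)) := by
      calc PD = ∏ i ∈ Finset.univ.map (Fin.castLEEmb hKM), (1 + lam (σp i)) := hmap
        _ ≤ (∏ i ∈ Finset.univ \ Finset.univ.map (Fin.castLEEmb hKM),
              (1 + lam (σp i))) *
            ∏ i ∈ Finset.univ.map (Fin.castLEEmb hKM), (1 + lam (σp i)) := by
            refine le_mul_of_one_le_left ?_ hrest
            rw [← hmap]; exact le_of_lt hPD_pos
        _ = ∏ i, (1 + lam (σp i)) := hsdiff
    apply Real.log_le_log hPD_pos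
    rw [hcomm, hdetH, hperm]
    exact hPDle
  -- ### Part 3 : phi sopt ≤ Psi D
  have part3 : phiEIG A sopt ≤ Psi (Matrix.diagonal sv) := by
    rw [hPsiD]
    unfold phiEIG Psi
    set T : Matrix (Fin M) (Fin K) ℝ := selectionMatrix sopt with hT
    have hTT : Tᵀ * T = 1 := selection_transpose_mul_self hsopt
    obtain ⟨U, hUUt, hUtU, hspec⟩ := real_spectral hH
    set C : Matrix (Fin K) (Fin M) ℝ := Tᵀ * U with hC
    have hCt : Cᵀ = Uᵀ * T := by rw [hC, Matrix.transpose_mul, Matrix.transpose_transpose]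
    have hCCt : C * Cᵀ = 1 := by
      rw [hC, hCt, Matrix.mul_assoc, ← Matrix.mul_assoc U, hUUt, Matrix.one_mul, hTT]
    set Q : Matrix (Fin M) (Fin M) ℝ := Matrix.diagonal (fun i => 1 + lam i) with hQ
    have hkey : (1 : Matrix (Fin N) (Fin N) ℝ) + (A * T) * (A * T)ᵀ
        = (1 : Matrix (Fin N) (Fin N) ℝ) + (A * T) * (A * T)ᵀ := rfl
    have hdet1 : (1 + (A * T) * (A * T)ᵀ).det = (1 + (A * T)ᵀ * (A * T)).det :=
      Matrix.det_one_add_mul_comm (A * T) (A * T)ᵀ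
    have hTHT : (A * T)ᵀ * (A * T) = Tᵀ * H * T := by
      rw [Matrix.transpose_mul, hHdef]
      rw [Matrix.mul_assoc, Matrix.mul_assoc, Matrix.mul_assoc]
    have hCQ : (C * Q) * Cᵀ = (1 : Matrix (Fin K) (Fin K) ℝ) + Tᵀ * H * T := by
      rw [hQ, ← one_add_diagonal]
      rw [Matrix.mul_add, Matrix.mul_one, Matrix.add_mul]
      rw [hCCt]
      congr 1
      rw [hC, hCt, hspec, ← hlam]
      simp only [Matrix.mul_assoc]
    have hsum : ((C * Q) * Cᵀ).det
        = ∑ p ∈ Finset.univ.filter (fun p : Fin K → Fin M => StrictMono p),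
            ((C * Q).submatrix id p).det * (C.submatrix id p).det := cauchy_binet _ _
    have hCQsub : ∀ p : Fin K → Fin M, (C * Q).submatrix id p
        = (C.submatrix id p) * Matrix.diagonal (fun j => 1 + lam (p j)) := by
      intro p
      ext a b
      simp only [Matrix.submatrix_apply, id, hQ, Matrix.mul_diagonal]
    have hsum1 : ((C * Q) * Cᵀ).det
        = ∑ p ∈ Finset.univ.filter (fun p : Fin K → Fin M => StrictMono p),
            ((C.submatrix id p).det)^2 * ∏ j, (1 + lam (p j)) := by
      rw [hsum]
      apply Finset.sum_congr rfl
      intro p _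
      rw [hCQsub p, Matrix.det_mul, Matrix.det_diagonal]
      ring
    have hterm : ∀ p : Fin K → Fin M, StrictMono p →
        (∏ j, (1 + lam (p j))) ≤ PD := by
      intro p hp
      have hinj : Function.Injective (⇑σp⁻¹ ∘ p) := (Equiv.injective _).comp hp.injective
      have := prod_injective_le (q := fun i => 1 + lam (σp i))
        (fun i => by linarith [hlam_nn (σp i)]) hanti hinj hKM
      calc (∏ j, (1 + lam (p j))) = ∏ j, (1 + lam (σp ((⇑σp⁻¹ ∘ p) j))) := by
            apply Finset.prod_congr rfl
            intro j _
            simp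
        _ ≤ PD := this
    have hsumle : ((C * Q) * Cᵀ).det ≤ PD := by
      rw [hsum1]
      calc ∑ p ∈ Finset.univ.filter (fun p : Fin K → Fin M => StrictMono p),
            ((C.submatrix id p).det)^2 * ∏ j, (1 + lam (p j))
          ≤ ∑ p ∈ Finset.univ.filter (fun p : Fin K → Fin M => StrictMono p),
            ((C.submatrix id p).det)^2 * PD := by
            apply Finset.sum_le_sum
            intro p hp
            exact mul_le_mul_of_nonneg_left (hterm p (Finset.mem_filter.mp hp).2) (sq_nonneg _)
        _ = (∑ p ∈ Finset.univ.filter (fun p : Fin K → Fin M => StrictMono p),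
            ((C.submatrix id p).det)^2) * PD := by rw [← Finset.sum_mul]
        _ = PD := by
            have hone : (∑ p ∈ Finset.univ.filter (fun p : Fin K → Fin M => StrictMono p),
                ((C.submatrix id p).det)^2) = 1 := by
              have := (cauchy_binet C C).symm
              rw [hCCt, Matrix.det_one] at this
              rw [← this]
              apply Finset.sum_congr rfl
              intro p _
              ring
            rw [hone, one_mul]
    have hposd : 0 < (1 + (A * T) * (A * T)ᵀ).det :=
      det_one_add_pos (psd_mul_transpose_self (A * T))
    apply Real.log_le_log hposd
    calc (1 + (A * T) * (A * T)ᵀ).det = ((C * Q) * Cᵀ).det := by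
          rw [hdet1, hTHT, hCQ]
      _ ≤ PD := hsumle
  -- ### Part 1 : lower bound
  have part1 : Psi ((specNorm (((selectionMatrix s)ᵀ * V)⁻¹))⁻¹ • Matrix.diagonal sv)
      ≤ phiEIG A s := by
    rcases Nat.eq_zero_or_pos K with hK0 | hKpos
    · subst hK0
      have h1 : Psi ((specNorm (((selectionMatrix s)ᵀ * V)⁻¹))⁻¹ • Matrix.diagonal sv) = 0 := by
        unfold Psi
        rw [Matrix.det_fin_zero, Real.log_one]
      rw [h1]
      unfold phiEIG Psi
      apply Real.log_nonneg
      exact one_le_det_one_add (psd_mul_transpose_self _)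
    · set S : Matrix (Fin M) (Fin K) ℝ := selectionMatrix s with hS
      set G : Matrix (Fin K) (Fin K) ℝ := Sᵀ * V with hG
      have hGt : Gᵀ = Vᵀ * S := by rw [hG, Matrix.transpose_mul, Matrix.transpose_transpose]
      have hGdet : IsUnit G.det := by
        rw [← Matrix.det_transpose, hGt]; exact hinv
      set B : Matrix (Fin K) (Fin K) ℝ := G⁻¹ with hB
      have hBG : B * G = 1 := Matrix.nonsing_inv_mul G hGdet
      have hBdet : IsUnit B.det := Matrix.isUnit_nonsing_inv_det G hGdet
      set nn : ℝ := specNorm B with hnn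
      set lamB : Fin K → ℝ := (Matrix.isHermitian_transpose_mul_self B).eigenvalues with hlamB
      have hlamB_nn : ∀ i, 0 ≤ lamB i := fun i => (psd_transpose_self_mul B).eigenvalues_nonneg i
      have hsing_le : ∀ j, singularValues B j ≤ nn := fun j =>
        le_ciSup (Set.Finite.bddAbove (Set.finite_range _)) j
      have hsing_nn : ∀ j, 0 ≤ singularValues B j := fun j => Real.sqrt_nonneg _
      have hnn_nn : 0 ≤ nn := le_trans (hsing_nn ⟨0, hKpos⟩) (hsing_le ⟨0, hKpos⟩)
      set σB : Equiv.Perm (Fin K) := Tuple.sort (fun i => -lamB i) with hσB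
      have hsingB : ∀ j, singularValues B j = Real.sqrt (lamB (σB j)) := fun j => rfl
      have hsing_eq : ∀ i, singularValues B (σB⁻¹ i) = Real.sqrt (lamB i) := by
        intro i
        rw [hsingB, ← Equiv.Perm.mul_apply, mul_inv_cancel, Equiv.Perm.one_apply]
      have hlamB_le : ∀ i, lamB i ≤ nn ^ 2 := by
        intro i
        have h2 : Real.sqrt (lamB i) ≤ nn := by
          rw [← hsing_eq i]; exact hsing_le _
        calc lamB i = (Real.sqrt (lamB i))^2 := (Real.sq_sqrt (hlamB_nn i)).symm
          _ ≤ nn^2 := by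
              apply pow_le_pow_left₀ (Real.sqrt_nonneg _) h2
      have hdetBB : (Bᵀ * B).det = B.det * B.det := by
        rw [Matrix.det_mul, Matrix.det_transpose]
      have hdet2 : (Bᵀ * B).det = ∏ i, lamB i := by
        have h := (Matrix.isHermitian_transpose_mul_self B).det_eq_prod_eigenvalues
        exact h
      have hnn_pos : 0 < nn := by
        rcases lt_or_eq_of_le hnn_nn with h | h
        · exact h
        · exfalso
          have hBdet0 : B.det ≠ 0 := hBdet.ne_zero
          have hprodpos : (0:ℝ) < ∏ i, lamB i := by
            rw [← hdet2, hdetBB]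
            rcases hBdet0.lt_or_gt with h' | h'
            · exact mul_pos_of_neg_of_neg h' h'
            · exact mul_pos h' h'
          have i0 : Fin K := ⟨0, hKpos⟩
          have hle : lamB i0 ≤ nn^2 := hlamB_le i0
          have h0 : lamB i0 = 0 := by
            have := hlamB_nn i0
            rw [← h] at hle
            nlinarith
          have : (∏ i, lamB i) = 0 := Finset.prod_eq_zero (Finset.mem_univ i0) h0
          rw [this] at hprodpos
          exact lt_irrefl _ hprodpos
      set c : ℝ := nn⁻¹ with hc
      have hc_nn : 0 ≤ c := inv_nonneg.mpr hnn_nn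
      have hcnn : c * nn = 1 := inv_mul_cancel₀ (ne_of_gt hnn_pos)
      -- step 1 : GᵀG - c²•1 is PSD
      have hW0 : ((nn^2) • (1 : Matrix (Fin K) (Fin K) ℝ) - Bᵀ * B).PosSemidef :=
        loewner_le_smul_one (Matrix.isHermitian_transpose_mul_self B) hlamB_le
      have hX2ps : (Gᵀ * ((nn^2) • (1 : Matrix (Fin K) (Fin K) ℝ) - Bᵀ * B) * G).PosSemidef :=
        psd_conj hW0 G
      have hX2eq : Gᵀ * ((nn^2) • (1 : Matrix (Fin K) (Fin K) ℝ) - Bᵀ * B) * G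
          = (nn^2) • (Gᵀ * G) - 1 := by
        rw [Matrix.mul_sub, Matrix.sub_mul]
        congr 1
        · rw [Matrix.mul_smul, Matrix.mul_one, Matrix.smul_mul]
        · have e : Gᵀ * (Bᵀ * B) * G = (B * G)ᵀ * (B * G) := by
            rw [Matrix.transpose_mul B G]
            simp only [Matrix.mul_assoc]
          rw [e, hBG]
          simp
      have hX3ps : ((Gᵀ * G) - (c*c) • (1 : Matrix (Fin K) (Fin K) ℝ)).PosSemidef := by
        have h1 := psd_conj' (hX2eq ▸ hX2ps) (c • (1 : Matrix (Fin K) (Fin K) ℝ))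
        have h2 : (c • (1 : Matrix (Fin K) (Fin K) ℝ)) * ((nn^2) • (Gᵀ * G) - 1) *
            (c • (1 : Matrix (Fin K) (Fin K) ℝ))ᵀ = (Gᵀ * G) - (c*c) • 1 := by
          rw [Matrix.transpose_smul, Matrix.transpose_one]
          rw [Matrix.smul_mul, Matrix.one_mul, Matrix.mul_smul, Matrix.mul_one]
          rw [smul_smul, smul_sub, smul_smul]
          congr 1
          · have : c * c * nn^2 = (c * nn) * (c * nn) := by ring
            rw [this, hcnn, one_mul, one_smul]
        rw [h2] at h1
        exact h1
      -- step 2 : H - V (DD) Vᵀ is PSD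
      set DD : Matrix (Fin K) (Fin K) ℝ := Matrix.diagonal (fun j => sv j * sv j) with hDD
      have hHV : H * V = V * DD := by
        ext i j
        have h := congrFun (hVeig j) i
        simp only [Matrix.mulVec, dotProduct, Pi.smul_apply, smul_eq_mul] at h
        rw [Matrix.mul_apply, Matrix.mul_diagonal]
        calc ∑ k, H i k * V k j = sv j ^ 2 * V i j := h
          _ = V i j * (sv j * sv j) := by ring
      set P0 : Matrix (Fin M) (Fin M) ℝ := V * Vᵀ with hP0
      have hP0t : P0ᵀ = P0 := by rw [hP0, Matrix.transpose_mul, Matrix.transpose_transpose]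
      set M0 : Matrix (Fin M) (Fin M) ℝ := V * DD * Vᵀ with hM0
      have hHsymm : Hᵀ = H := by
        have := hH
        rwa [Matrix.IsHermitian, Matrix.conjTranspose_eq_transpose_of_trivial] at this
      have hM0t : M0ᵀ = M0 := by
        rw [hM0, Matrix.transpose_mul, Matrix.transpose_mul, Matrix.transpose_transpose,
          Matrix.diagonal_transpose, Matrix.mul_assoc]
      have e1 : H * P0 = M0 := by
        rw [hP0, hM0, ← Matrix.mul_assoc, hHV]
      have e2 : P0 * H = M0 := by
        have := congrArg Matrix.transpose e1
        rwa [Matrix.transpose_mul, hP0t, hHsymm, hM0t] at this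
      have e4 : M0 * P0 = M0 := by
        rw [hM0, hP0]
        calc V * DD * Vᵀ * (V * Vᵀ) = V * DD * (Vᵀ * V) * Vᵀ := by
              simp only [Matrix.mul_assoc]
          _ = V * DD * Vᵀ := by rw [hVorth, Matrix.mul_one]
      have hcomp : (1 - P0) * H * (1 - P0) = H - M0 := by
        rw [Matrix.sub_mul, Matrix.one_mul, e2]
        rw [Matrix.mul_sub, Matrix.mul_one, Matrix.sub_mul, e1, e4]
        abel
      have hM0ps : (H - M0).PosSemidef := by
        have h1 := psd_conj' hHps (1 - P0)
        rwa [Matrix.transpose_sub, Matrix.transpose_one, hP0t, hcomp] at h1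
      -- step 3 : determinant chain
      set D : Matrix (Fin K) (Fin K) ℝ := Matrix.diagonal sv with hD
      have hDt : Dᵀ = D := Matrix.diagonal_transpose _
      have hDDmul : D * D = DD := by rw [hD, Matrix.diagonal_mul_diagonal, hDD]
      set E : Matrix (Fin K) (Fin K) ℝ := c • D with hE
      have hEEt : E * Eᵀ = (c*c) • (D * D) := by
        rw [hE, Matrix.transpose_smul, hDt, Matrix.smul_mul, Matrix.mul_smul, smul_smul]
      have hR1 : (D * ((Gᵀ * G) - (c*c) • 1) * D).PosSemidef := by
        have := psd_conj' hX3ps D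
        rwa [hDt] at this
      have hsplit1 : (1 : Matrix (Fin K) (Fin K) ℝ) + E * Eᵀ +
          D * ((Gᵀ * G) - (c*c) • 1) * D = 1 + D * (Gᵀ * G) * D := by
        rw [hEEt]
        rw [Matrix.mul_sub, Matrix.sub_mul]
        have : D * ((c*c) • (1 : Matrix (Fin K) (Fin K) ℝ)) * D = (c*c) • (D * D) := by
          rw [Matrix.mul_smul, Matrix.mul_one, Matrix.smul_mul]
        rw [this]
        abel
      have hd1 : (1 + E * Eᵀ).det ≤ (1 + D * (Gᵀ * G) * D).det := by
        have h := det_mono (P := E * Eᵀ) (R := D * ((Gᵀ * G) - (c*c) • 1) * D)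
          (psd_mul_transpose_self E) hR1
        rwa [hsplit1] at h
      have hGD : D * (Gᵀ * G) * D = (G * D)ᵀ * (G * D) := by
        rw [Matrix.transpose_mul G D, hDt]
        simp only [Matrix.mul_assoc]
      have hd2 : (1 + D * (Gᵀ * G) * D).det = (1 + (G * D) * (G * D)ᵀ).det := by
        rw [hGD, Matrix.det_one_add_mul_comm]
      have hGDD : (G * D) * (G * D)ᵀ = Sᵀ * (V * DD * Vᵀ) * S := by
        rw [Matrix.transpose_mul G D, hDt, hG, Matrix.transpose_mul Sᵀ V,
          Matrix.transpose_transpose, ← hDDmul]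
        simp only [Matrix.mul_assoc]
      have hsplit2 : (1 : Matrix (Fin K) (Fin K) ℝ) + (G * D) * (G * D)ᵀ +
          Sᵀ * (H - M0) * S = 1 + Sᵀ * H * S := by
        rw [hGDD, hM0]
        rw [Matrix.mul_sub, Matrix.sub_mul]
        abel
      have hd3 : (1 + (G * D) * (G * D)ᵀ).det ≤ (1 + Sᵀ * H * S).det := by
        have h := det_mono (P := (G * D) * (G * D)ᵀ) (R := Sᵀ * (H - M0) * S)
          (psd_mul_transpose_self (G * D)) (psd_conj hM0ps S)
        rwa [hsplit2] at h
      have hd4 : (1 + Sᵀ * H * S).det = (1 + (A * S) * (A * S)ᵀ).det := by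
        have : Sᵀ * H * S = (A * S)ᵀ * (A * S) := by
          rw [Matrix.transpose_mul, hHdef]
          simp only [Matrix.mul_assoc]
        rw [this]
        exact Matrix.det_one_add_mul_comm _ _
      -- conclude
      have hchain : (1 + E * Eᵀ).det ≤ (1 + (A * S) * (A * S)ᵀ).det := by
        rw [← hd4]
        exact le_trans (hd1.trans_eq hd2) hd3
      have hgoal : Psi E ≤ Psi (A * S) := by
        unfold Psi
        exact Real.log_le_log (det_one_add_pos (psd_mul_transpose_self E)) hchain
      exact hgoal
  exact ⟨part1, hopt s hs, part3, part4⟩
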